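/- If t ∈ FEnd(Σ*) has bounded activity, i.e., there is a constant C with α_t(n) ≤ C for all n ∈ ℕ, then the orbit signalizer graph Φ(t) has finitely many vertices. -/

import Mathlib

open Filter Topology

namespace AutHier

variable {A : Type*}

/-- The section (state) `f|_u` of a transformation `f : Σ* → Σ*` at the word `u`. -/
def sec (f : List A → List A) (u : List A) : List A → List A :=
  fun v => (f (u ++ v)).drop u.length

/-- `f` is an endomorphism of `Σ*`: it preserves lengths and prefixes. -/
def IsEnd (f : List A → List A) : Prop :=
  (∀ u, (f u).length = u.length) ∧ ∀ u v, f u <+: f (u ++ v)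

/-- `f` is a finite-state endomorphism of `Σ*` (an element of `FEnd(Σ*)`). -/
def IsFEnd (f : List A → List A) : Prop :=
  IsEnd f ∧ {g | ∃ u, g = sec f u}.Finite

/-- The activity `α_f(n)` of a transformation `f`:
the number of words `v` of length `n` which are images of some word `u`
of length `n` whose section `f|_u` is nontrivial. -/
noncomputable def activity (f : List A → List A) (n : ℕ) : ℕ :=
  Set.ncard {v : List A | v.length = n ∧
    ∃ u : List A, u.length = n ∧ sec f u ≠ id ∧ f u = v}

/-- The class `SP(d)` of finite-state endomorphisms of
polynomial activity of degree at most `d`. -/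
def SP (A : Type*) (d : ℤ) : Set (List A → List A) :=
  {t | IsFEnd t ∧
    Tendsto (fun n : ℕ => (activity t n : ℝ) / (n : ℝ) ^ (d + 1)) atTop (𝓝 0)}

/-- The class `SE(l)` of finite-state endomorphisms of
exponential activity of growth rate at most `l`. -/
def SE (A : Type*) (l : ℝ) : Set (List A → List A) :=
  {t | IsFEnd t ∧
    limsup (fun n : ℕ => Real.log (activity t n) / (n : ℝ)) atTop ≤ l}

/-- The stateset `Q'(t)` of the pruned automaton: all sections of `t` except `id`. -/
def Qp (t : List A → List A) : Set (List A → List A) :=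
  {g | ∃ u, g = sec t u} \ {id}

/-- One-letter transition of the determinized pruned output automaton of `t`. -/
def delta (t : List A → List A) (S : Set (List A → List A)) (y : A) :
    Set (List A → List A) :=
  {s' | s' ∈ Qp t ∧ ∃ s ∈ S, ∃ x : A, s [x] = [y] ∧ sec s [x] = s'}

/-- Extended transition function `δ*` of the determinized pruned output automaton. -/
def deltaStar (t : List A → List A) (S : Set (List A → List A)) (v : List A) :
    Set (List A → List A) :=
  v.foldl (delta t) S

/-- There is a chain of `k` cycles in the determinized pruned output automaton of `t`. -/
def ChainOfCycles (t : List A → List A) (k : ℕ) : Prop :=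
  ∃ (S : Fin k → Set (List A → List A)) (c : Fin k → List A),
    (∀ i, S i ≠ ∅) ∧ (∀ i, c i ≠ []) ∧
    (∀ h : 0 < k, ∃ v, deltaStar t {t} v = S ⟨0, h⟩) ∧
    (∀ i, deltaStar t (S i) (c i) = S i) ∧
    (∀ (i : Fin k) (h : (i : ℕ) + 1 < k),
      (∃ v, deltaStar t (S i) v = S ⟨(i : ℕ) + 1, h⟩) ∧
      ¬ (∃ v, deltaStar t (S ⟨(i : ℕ) + 1, h⟩) v = S i))

/-- The edge relation of the orbit signalizer graph `Φ`: from the vertex `v = (s,t)`,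
reading the letter `x`, with label `(x; m, ℓ)` where `m, ℓ` are the minimal integers
(`ℓ ≥ 1`) with `(s t^{m+ℓ})·x = (s t^m)·x`, the edge goes to
`v' = (r|_x, (t^ℓ)|_{r·x})` where `r = s t^m`. -/
def OSStep (v : (List A → List A) × (List A → List A)) (x : A) (m ℓ : ℕ)
    (v' : (List A → List A) × (List A → List A)) : Prop :=
  1 ≤ ℓ ∧ v.2^[m + ℓ] (v.1 [x]) = v.2^[m] (v.1 [x]) ∧
  (∀ m' ℓ' : ℕ, 1 ≤ ℓ' → v.2^[m' + ℓ'] (v.1 [x]) = v.2^[m'] (v.1 [x]) → m ≤ m') ∧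
  (∀ ℓ' : ℕ, 1 ≤ ℓ' → v.2^[m + ℓ'] (v.1 [x]) = v.2^[m] (v.1 [x]) → ℓ ≤ ℓ') ∧
  v' = (sec (v.2^[m] ∘ v.1) [x], sec (v.2^[ℓ]) ((v.2^[m] ∘ v.1) [x]))

/-- A walk of length `n` in the orbit signalizer graph `Φ`. -/
structure OSPath (A : Type*) (n : ℕ) where
  vert : Fin (n + 1) → (List A → List A) × (List A → List A)
  lett : Fin n → A
  idx : Fin n → ℕ
  per : Fin n → ℕ
  step : ∀ k : Fin n, OSStep (vert k.castSucc) (lett k) (idx k) (per k) (vert k.succ)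

/-- The inf-index-cost `i⁻(π)` of a walk with indices `idx` and periods `per`. -/
def iminusCost {n : ℕ} (idx per : Fin n → ℕ) : ℕ :=
  ∑ k : Fin n, if idx k = 0 then 0
    else (idx k - 1) * (∏ j ∈ Finset.univ.filter (· < k), per j) + 1

/-- The sup-index-cost `i⁺(π)` of a walk with indices `idx` and periods `per`. -/
def iplusCost {n : ℕ} (idx per : Fin n → ℕ) : ℕ :=
  ∑ k : Fin n, (∏ j ∈ Finset.univ.filter (· < k), per j) * idx k

/-- The period-cost `p(π)` of a walk with periods `per`. -/
def pCost {n : ℕ} (per : Fin n → ℕ) : ℕ :=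
  ∏ k : Fin n, per k

/-- The walk `w` starts at the vertex `(id, t)`, i.e. it is a walk in `Φ(t)` from its root. -/
def IsWalkFrom {n : ℕ} (t : List A → List A) (w : OSPath A n) : Prop :=
  w.vert 0 = (id, t)

/-- The vertex `v` is accessible from `(id, t)` in `Φ`, i.e. `v` is a vertex of `Φ(t)`. -/
def OSReach (t : List A → List A) (v : (List A → List A) × (List A → List A)) : Prop :=
  ∃ n : ℕ, ∃ w : OSPath A n, IsWalkFrom t w ∧ w.vert (Fin.last n) = v

/-- The set of inf-index-costs of walks in `Φ(t)` from `(id, t)`. -/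
def IminusCosts (t : List A → List A) : Set ℕ :=
  {c | ∃ n : ℕ, ∃ w : OSPath A n, IsWalkFrom t w ∧ c = iminusCost w.idx w.per}

/-- The set of sup-index-costs of walks in `Φ(t)` from `(id, t)`. -/
def IplusCosts (t : List A → List A) : Set ℕ :=
  {c | ∃ n : ℕ, ∃ w : OSPath A n, IsWalkFrom t w ∧ c = iplusCost w.idx w.per}

/-- The set of period-costs of walks in `Φ(t)` from `(id, t)`. -/
def PCosts (t : List A → List A) : Set ℕ :=
  {c | ∃ n : ℕ, ∃ w : OSPath A n, IsWalkFrom t w ∧ c = pCost w.per}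

/-- `w` is a simple cycle of `Φ(t)`: a closed walk of positive length, lying in `Φ(t)`,
with no repeated vertices. -/
def IsSimpleCycle {n : ℕ} (t : List A → List A) (w : OSPath A n) : Prop :=
  1 ≤ n ∧ OSReach t (w.vert 0) ∧ w.vert (Fin.last n) = w.vert 0 ∧
  ∀ j k : Fin (n + 1), (j : ℕ) < n → (k : ℕ) < n → w.vert j = w.vert k → j = k

/-!
Every vertex of `Φ(t)` has the form `((t^a)|_u, (t^P)|_w)`, where `w = t^a·u` is a periodic
point of `t` of minimal period `P` and no point `t^j·u` with `j + P ≤ a` is periodic: an edge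
with label `(x; m, ℓ)` replaces `u` by `ux`, `a` by `a + mP` and `P` by `ℓP`. For such a vertex
the words `t^{j+1}·u` (`j < a`) are pairwise distinct, and so are the words `t^{j+1}·w`
(`j < P`). Since `(t^a)|_u` is the composition of the sections `t|_{t^j·u}` (`j < a`), at most
`α_t(|u|)` of its factors differ from `id`, and likewise for `(t^P)|_w`. Bounded activity thus
confines both coordinates of a vertex to compositions of at most `C` sections of `t`, a finite
set.
-/

open Function Set

section Sections

variable {f g : List A → List A}

@[simp]
lemma sec_nil (f : List A → List A) : sec f [] = f := by
  funext v
  simp [sec]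

@[simp]
lemma sec_id (u : List A) : sec (id : List A → List A) u = id := by
  funext v
  simp [sec]

lemma sec_append (f : List A → List A) (u v : List A) :
    sec f (u ++ v) = sec (sec f u) v := by
  funext z
  simp [sec, List.drop_drop]

lemma IsEnd.append_eq (hf : IsEnd f) (u v : List A) : f (u ++ v) = f u ++ sec f u v := by
  obtain ⟨z, hz⟩ := hf.2 u v
  rw [sec, ← hz, ← hf.1 u, List.drop_left]

lemma isEnd_id : IsEnd (id : List A → List A) :=
  ⟨fun _ => rfl, fun _ v => ⟨v, rfl⟩⟩

lemma IsEnd.comp (hf : IsEnd f) (hg : IsEnd g) : IsEnd (g ∘ f) :=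
  ⟨fun u => by simp [hg.1, hf.1],
    fun u v => ⟨sec g (f u) (sec f u v),
      by simp only [comp_apply, hf.append_eq, hg.append_eq]⟩⟩

lemma IsEnd.iterate (hf : IsEnd f) (k : ℕ) : IsEnd f^[k] := by
  induction k with
  | zero => exact isEnd_id
  | succ k ih => rw [iterate_succ']; exact ih.comp hf

lemma sec_comp (hf : IsEnd f) (u : List A) : sec (g ∘ f) u = sec g (f u) ∘ sec f u := by
  funext v
  change (g (f (u ++ v))).drop u.length = (g (f u ++ sec f u v)).drop (f u).length
  rw [hf.append_eq u v, hf.1 u]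

lemma IsEnd.sec_iterate_add (hf : IsEnd f) (m n : ℕ) (u : List A) :
    sec f^[m + n] u = sec f^[m] (f^[n] u) ∘ sec f^[n] u := by
  rw [iterate_add, sec_comp (hf.iterate n)]

lemma IsEnd.sec_iterate_of_isFixedPt (hf : IsEnd f) {u : List A} (hu : IsFixedPt f u) (k : ℕ) :
    sec f^[k] u = (sec f u)^[k] := by
  induction k with
  | zero => simp
  | succ k ih => rw [iterate_succ, sec_comp hf, hu.eq, ih, iterate_succ]

lemma IsEnd.isPeriodicPt_append_iff (hf : IsEnd f) {n : ℕ} {u v : List A} :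
    IsPeriodicPt f n (u ++ v) ↔ IsPeriodicPt f n u ∧ sec f^[n] u v = v := by
  simp only [IsPeriodicPt, IsFixedPt, (hf.iterate n).append_eq]
  exact ⟨fun h => List.append_inj h ((hf.iterate n).1 u),
    fun ⟨h₁, h₂⟩ => by rw [h₁, h₂]⟩

lemma IsEnd.mem_periodicPts_of_append (hf : IsEnd f) {u v : List A}
    (h : u ++ v ∈ periodicPts f) : u ∈ periodicPts f := by
  obtain ⟨n, hn, hper⟩ := h
  exact ⟨n, hn, (hf.isPeriodicPt_append_iff.1 hper).1⟩

end Sections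

section Cycle

variable {t : List A → List A}

lemma IsEnd.sec_iterate_minimalPeriod_mul (ht : IsEnd t) (w : List A) (c : ℕ) :
    sec t^[minimalPeriod t w * c] w = (sec t^[minimalPeriod t w] w)^[c] := by
  rw [iterate_mul, (ht.iterate _).sec_iterate_of_isFixedPt iterate_minimalPeriod]

lemma IsEnd.isPeriodicPt_append_iff_exists_mul (ht : IsEnd t) {n : ℕ} {w y : List A} :
    IsPeriodicPt t n (w ++ y) ↔
      ∃ c, n = minimalPeriod t w * c ∧ IsPeriodicPt (sec t^[minimalPeriod t w] w) c y := by
  rw [ht.isPeriodicPt_append_iff, isPeriodicPt_iff_minimalPeriod_dvd]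
  constructor
  · rintro ⟨⟨c, rfl⟩, hy⟩
    exact ⟨c, rfl, by rwa [ht.sec_iterate_minimalPeriod_mul] at hy⟩
  · rintro ⟨c, rfl, hy⟩
    exact ⟨dvd_mul_right _ _, by rwa [ht.sec_iterate_minimalPeriod_mul]⟩

lemma IsEnd.append_mem_periodicPts_iff (ht : IsEnd t) {w : List A} (hw : w ∈ periodicPts t)
    (y : List A) :
    w ++ y ∈ periodicPts t ↔ y ∈ periodicPts (sec t^[minimalPeriod t w] w) := by
  simp only [mem_periodicPts, ht.isPeriodicPt_append_iff_exists_mul]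
  constructor
  · rintro ⟨_, hn, c, rfl, hy⟩
    exact ⟨c, Nat.pos_of_mul_pos_left hn, hy⟩
  · rintro ⟨c, hc, hy⟩
    exact ⟨_, Nat.mul_pos (minimalPeriod_pos_of_mem_periodicPts hw) hc, c, rfl, hy⟩

lemma IsEnd.minimalPeriod_append (ht : IsEnd t) (w y : List A) :
    minimalPeriod t (w ++ y) =
      minimalPeriod t w * minimalPeriod (sec t^[minimalPeriod t w] w) y := by
  apply Nat.dvd_antisymm
  · exact IsPeriodicPt.minimalPeriod_dvd
      (ht.isPeriodicPt_append_iff_exists_mul.2 ⟨_, rfl, isPeriodicPt_minimalPeriod _ _⟩)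
  · obtain ⟨c, hc, hy⟩ :=
      ht.isPeriodicPt_append_iff_exists_mul.1 (isPeriodicPt_minimalPeriod t (w ++ y))
    rw [hc]
    exact mul_dvd_mul_left _ hy.minimalPeriod_dvd

lemma IsEnd.sec_iterate_minimalPeriod_mul_add (ht : IsEnd t) (u : List A) (a k : ℕ) :
    sec t^[minimalPeriod t (t^[a] u) * k + a] u =
      (sec t^[minimalPeriod t (t^[a] u)] (t^[a] u))^[k] ∘ sec t^[a] u := by
  rw [ht.sec_iterate_add, ht.sec_iterate_minimalPeriod_mul]

lemma IsEnd.iterate_minimalPeriod_mul_add_append (ht : IsEnd t) (u z : List A) (a k : ℕ) :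
    t^[minimalPeriod t (t^[a] u) * k + a] (u ++ z) =
      t^[a] u ++ (sec t^[minimalPeriod t (t^[a] u)] (t^[a] u))^[k] (sec t^[a] u z) := by
  rw [(ht.iterate _).append_eq, ht.sec_iterate_minimalPeriod_mul_add, iterate_add_apply,
    ((isPeriodicPt_minimalPeriod t (t^[a] u)).mul_const k).eq, comp_apply]

end Cycle

section OSStep

variable {v v' : (List A → List A) × (List A → List A)} {x : A} {m ℓ : ℕ}

lemma OSStep.isPeriodicPt (h : OSStep v x m ℓ v') :
    IsPeriodicPt v.2 ℓ (v.2^[m] (v.1 [x])) := by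
  rw [IsPeriodicPt, IsFixedPt, ← iterate_add_apply, Nat.add_comm]
  exact h.2.1

lemma OSStep.mem_periodicPts (h : OSStep v x m ℓ v') : v.2^[m] (v.1 [x]) ∈ periodicPts v.2 :=
  mk_mem_periodicPts h.1 h.isPeriodicPt

lemma OSStep.minimalPeriod_eq (h : OSStep v x m ℓ v') :
    minimalPeriod v.2 (v.2^[m] (v.1 [x])) = ℓ := by
  refine le_antisymm (h.isPeriodicPt.minimalPeriod_le h.1)
    (h.2.2.2.1 _ (h.isPeriodicPt.minimalPeriod_pos h.1) ?_)
  rw [Nat.add_comm, iterate_add_apply]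
  exact iterate_minimalPeriod

lemma OSStep.notMem_periodicPts (h : OSStep v x m ℓ v') {k : ℕ} (hk : k < m) :
    v.2^[k] (v.1 [x]) ∉ periodicPts v.2 := by
  rintro ⟨n, hn, hper⟩
  have := h.2.2.1 k n hn (by rw [Nat.add_comm, iterate_add_apply]; exact hper)
  omega

end OSStep

section Vertices

variable {t : List A → List A}

def IsSignalizerVertex (t : List A → List A) (v : (List A → List A) × (List A → List A)) :
    Prop :=
  ∃ (u : List A) (a : ℕ), t^[a] u ∈ periodicPts t ∧
    (∀ j, j + minimalPeriod t (t^[a] u) ≤ a → t^[j] u ∉ periodicPts t) ∧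
    v = (sec t^[a] u, sec t^[minimalPeriod t (t^[a] u)] (t^[a] u))

lemma isSignalizerVertex_root (ht : IsEnd t) : IsSignalizerVertex t (id, t) := by
  have hnil : IsFixedPt t [] := List.length_eq_zero_iff.mp (ht.1 [])
  have hP : minimalPeriod t [] = 1 := minimalPeriod_eq_one_iff_isFixedPt.2 hnil
  refine ⟨[], 0, mk_mem_periodicPts one_pos (hnil.isPeriodicPt 1), fun j hj => ?_, ?_⟩
  · rw [iterate_zero_apply, hP] at hj
    omega
  · simp [hP]

lemma iterate_append_notMem_periodicPts_of_osStep (ht : IsEnd t) {u : List A} {a : ℕ}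
    (hw : t^[a] u ∈ periodicPts t)
    (hpre : ∀ j, j + minimalPeriod t (t^[a] u) ≤ a → t^[j] u ∉ periodicPts t)
    {x : A} {m ℓ : ℕ} {v' : (List A → List A) × (List A → List A)}
    (h : OSStep (sec t^[a] u, sec t^[minimalPeriod t (t^[a] u)] (t^[a] u)) x m ℓ v')
    {j : ℕ} (hj : j + minimalPeriod t (t^[a] u) * ℓ ≤ minimalPeriod t (t^[a] u) * m + a) :
    t^[j] (u ++ [x]) ∉ periodicPts t := by
  set P := minimalPeriod t (t^[a] u)
  have hPℓ : P ≤ P * ℓ := Nat.le_mul_of_pos_right P h.1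
  intro hper
  rcases m with _ | m
  · rw [(ht.iterate j).append_eq] at hper
    exact hpre j (by omega) (ht.mem_periodicPts_of_append hper)
  · -- iterating forward, `t^[P * m + a] (u ++ [x])` would be periodic,
    -- against the minimality of the index `m + 1`
    obtain ⟨n, hn, hn_per⟩ := hper
    have hfwd := mk_mem_periodicPts hn (hn_per.apply_iterate (P * m + a - j))
    rw [← iterate_add_apply, Nat.sub_add_cancel (by rw [Nat.mul_succ] at hj; omega),
      ht.iterate_minimalPeriod_mul_add_append, ht.append_mem_periodicPts_iff hw] at hfwd
    exact h.notMem_periodicPts (Nat.lt_succ_self m) hfwd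

lemma IsSignalizerVertex.of_osStep (ht : IsEnd t)
    {v v' : (List A → List A) × (List A → List A)} {x : A} {m ℓ : ℕ}
    (hv : IsSignalizerVertex t v) (h : OSStep v x m ℓ v') :
    IsSignalizerVertex t v' := by
  obtain ⟨u, a, hw, hpre, rfl⟩ := hv
  have hy := h.mem_periodicPts
  have hℓ := h.minimalPeriod_eq
  dsimp only at hy hℓ
  have hu' := ht.iterate_minimalPeriod_mul_add_append u [x] a m
  refine ⟨u ++ [x], minimalPeriod t (t^[a] u) * m + a, ?_, ?_, ?_⟩
  · rw [hu']
    exact (ht.append_mem_periodicPts_iff hw _).2 hy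
  · rw [hu', ht.minimalPeriod_append, hℓ]
    exact fun j hj => iterate_append_notMem_periodicPts_of_osStep ht hw hpre h hj
  · rw [h.2.2.2.2, hu', ht.minimalPeriod_append, hℓ, sec_append, sec_append,
      ht.sec_iterate_minimalPeriod_mul_add, ht.sec_iterate_minimalPeriod_mul]
    rfl

lemma OSPath.isSignalizerVertex (ht : IsEnd t) {n : ℕ} (w : OSPath A n) (hw : IsWalkFrom t w)
    (k : Fin (n + 1)) : IsSignalizerVertex t (w.vert k) := by
  induction k using Fin.induction with
  | zero => rw [hw]; exact isSignalizerVertex_root ht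
  | succ i ih => exact ih.of_osStep ht (w.step i)

lemma OSReach.isSignalizerVertex (ht : IsEnd t) {v : (List A → List A) × (List A → List A)}
    (h : OSReach t v) : IsSignalizerVertex t v := by
  obtain ⟨n, w, hw, rfl⟩ := h
  exact w.isSignalizerVertex ht hw _

end Vertices

section Counting

variable {α : Type*}

lemma injOn_iterate_Iic_of_notMem_periodicPts {f : α → α} {x : α} {a : ℕ}
    (hpre : ∀ j, j + minimalPeriod f (f^[a] x) ≤ a → f^[j] x ∉ periodicPts f) :
    InjOn (fun j => f^[j] x) (Iic a) := by
  suffices key : ∀ i j, i < j → j ≤ a → f^[i] x ≠ f^[j] x by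
    intro i hi j hj hij
    by_contra hne
    rcases lt_or_gt_of_ne hne with h | h
    · exact key i j h hj hij
    · exact key j i h hi hij.symm
  intro i j hij hja heq
  have hper : IsPeriodicPt f (j - i) (f^[i] x) := by
    rw [IsPeriodicPt, IsFixedPt, ← iterate_add_apply, Nat.sub_add_cancel hij.le]
    exact heq.symm
  have hmem := mk_mem_periodicPts (Nat.sub_pos_of_lt hij) hper
  have hP : minimalPeriod f (f^[a] x) = minimalPeriod f (f^[i] x) := by
    rw [← Nat.sub_add_cancel (hij.le.trans hja), iterate_add_apply,
      minimalPeriod_apply_iterate hmem]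
  have hai : a < i + minimalPeriod f (f^[a] x) := by
    by_contra! hle
    exact hpre i hle hmem
  have := Nat.le_of_dvd (Nat.sub_pos_of_lt hij) (hP ▸ hper.minimalPeriod_dvd)
  omega

lemma injOn_iterate_succ_Iio_minimalPeriod {f : α → α} {x : α} (hx : x ∈ periodicPts f) :
    InjOn (fun j => f^[j + 1] x) (Iio (minimalPeriod f x)) := by
  have h := iterate_injOn_Iio_minimalPeriod (f := f) (x := f x)
  rw [minimalPeriod_apply hx] at h
  simpa only [iterate_succ_apply] using h

def compositions (S : Set (α → α)) (K : ℕ) : Set (α → α) :=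
  (fun l : List S => (l.map Subtype.val).foldr (· ∘ ·) id) '' {l | l.length ≤ K}

lemma finite_compositions {S : Set (α → α)} (hS : S.Finite) (K : ℕ) :
    (compositions S K).Finite :=
  have := hS.to_subtype
  (List.finite_length_le S K).image _

lemma compositions_mono {S : Set (α → α)} {K K' : ℕ} (hK : K ≤ K') :
    compositions S K ⊆ compositions S K' :=
  image_mono fun _ hl => le_trans hl hK

variable {t : List A → List A}

open scoped Classical in
lemma sec_iterate_mem_compositions (ht : IsEnd t) (u : List A) (a : ℕ) :
    sec t^[a] u ∈ compositions (range (sec t))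
      ((Finset.range a).filter fun j => sec t (t^[j] u) ≠ id).card := by
  induction a with
  | zero => exact ⟨[], Nat.zero_le _, by simp⟩
  | succ a ih =>
    obtain ⟨l, hl, hfold⟩ := ih
    have hsec : sec t^[a + 1] u = sec t (t^[a] u) ∘ sec t^[a] u := by
      rw [Nat.add_comm, ht.sec_iterate_add, iterate_one]
    rw [hsec, Finset.range_add_one, Finset.filter_insert]
    by_cases hid : sec t (t^[a] u) = id
    · rw [if_neg (not_not.2 hid), hid, id_comp]
      exact ⟨l, hl, hfold⟩
    · rw [if_pos hid, Finset.card_insert_of_notMem (by simp)]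
      refine ⟨⟨_, mem_range_self (t^[a] u)⟩ :: l, Nat.succ_le_succ hl, ?_⟩
      simp only [List.map_cons, List.foldr_cons, ← hfold]

open scoped Classical in
lemma card_filter_sec_ne_id_le_activity [Finite A] (ht : IsEnd t) {u : List A} {a : ℕ}
    (hinj : InjOn (fun j => t^[j + 1] u) (Iio a)) :
    ((Finset.range a).filter fun j => sec t (t^[j] u) ≠ id).card ≤ activity t u.length := by
  rw [activity, ← Set.ncard_coe_finset]
  refine Set.ncard_le_ncard_of_injOn (fun j => t^[j + 1] u) ?_ (hinj.mono ?_)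
    ((List.finite_length_eq A u.length).subset fun _ hv => hv.1)
  · intro j hj
    simp only [Finset.coe_filter, Finset.mem_range, mem_ofPred_eq] at hj
    exact ⟨(ht.iterate _).1 u, t^[j] u, (ht.iterate j).1 u, hj.2,
      (iterate_succ_apply' t j u).symm⟩
  · intro j hj
    simp only [Finset.coe_filter, Finset.mem_range, mem_ofPred_eq] at hj
    exact hj.1

lemma sec_iterate_mem_compositions_of_injOn [Finite A] (ht : IsEnd t) {C : ℕ}
    (hC : ∀ n, activity t n ≤ C) {u : List A} {a : ℕ}
    (hinj : InjOn (fun j => t^[j + 1] u) (Iio a)) :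
    sec t^[a] u ∈ compositions (range (sec t)) C :=
  compositions_mono ((card_filter_sec_ne_id_le_activity ht hinj).trans (hC _))
    (sec_iterate_mem_compositions ht u a)

lemma IsSignalizerVertex.mem_compositions [Finite A] (ht : IsEnd t) {C : ℕ}
    (hC : ∀ n, activity t n ≤ C) {v : (List A → List A) × (List A → List A)}
    (hv : IsSignalizerVertex t v) :
    v ∈ compositions (range (sec t)) C ×ˢ compositions (range (sec t)) C := by
  obtain ⟨u, a, hw, hpre, rfl⟩ := hv
  have hinj := injOn_iterate_Iic_of_notMem_periodicPts hpre
  exact ⟨sec_iterate_mem_compositions_of_injOn ht hC fun i hi j hj hij =>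
      Nat.succ_injective (hinj (Nat.succ_le_of_lt hi) (Nat.succ_le_of_lt hj) hij),
    sec_iterate_mem_compositions_of_injOn ht hC (injOn_iterate_succ_Iio_minimalPeriod hw)⟩

end Counting

/-- If `t ∈ FEnd(Σ*)` has bounded activity, then the orbit signalizer graph `Φ(t)` has
finitely many vertices. -/
theorem bounded_activity_finite_OS {A : Type*} [Fintype A] (t : List A → List A)
    (ht : IsFEnd t) (C : ℕ) (hC : ∀ n : ℕ, activity t n ≤ C) :
    {v | OSReach t v}.Finite := by
  have hS : (range (sec t)).Finite := ht.2.subset fun _ ⟨u, hu⟩ => ⟨u, hu.symm⟩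
  exact ((finite_compositions hS C).prod (finite_compositions hS C)).subset
    fun _ hv => (hv.isSignalizerVertex ht.1).mem_compositions ht.1 hC

end AutHier
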